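/- The Thue-Morse word t has no privileged factor of odd length n with n ≥ 5. -/

import Mathlib

/-- Number of occurrences of `u` as a factor of `w` (positions are 0-indexed). -/
noncomputable def occCount {A : Type*} (u w : List A) : ℕ :=
  Set.ncard {i : ℕ | i + u.length ≤ w.length ∧ (w.drop i).take u.length = u}

/-- `v` is a complete first return to `u`: `u` is a prefix and a suffix of `v`,
and `u` has exactly two occurrences in `v`. -/
def IsCompleteFirstReturn {A : Type*} (v u : List A) : Prop :=
  u <+: v ∧ u <:+ v ∧ occCount u v = 2

/-- Privileged words: the empty word and the single letters are privileged, and a word of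
length at least 2 is privileged if it is a complete first return to a shorter privileged word. -/
inductive Privileged {A : Type*} : List A → Prop where
  | nil : Privileged ([] : List A)
  | single (a : A) : Privileged [a]
  | ret (w u : List A) : 2 ≤ w.length → u.length < w.length → Privileged u →
      IsCompleteFirstReturn w u → Privileged w

/-- A complete return word: a complete first return to some word
(the empty word counted by convention; letters are complete first returns to the empty word). -/
def IsCompleteReturnWord {A : Type*} (v : List A) : Prop :=
  v = [] ∨ ∃ u : List A, IsCompleteFirstReturn v u

/-- Position `i` of `w` (1-based, `1 ≤ i ≤ |w|`) introduces the factor `u`: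
`u` occurs in `w` ending at position `i` and `u` occurs exactly once in the prefix `w[1,i]`. -/
def Introduces {A : Type*} (w : List A) (i : ℕ) (u : List A) : Prop :=
  1 ≤ i ∧ i ≤ w.length ∧ u <:+ w.take i ∧ occCount u (w.take i) = 1

/-- A finite word is rich if it has exactly `|w| + 1` distinct palindromic factors. -/
noncomputable def RichWord {A : Type*} (w : List A) : Prop :=
  Set.ncard {u : List A | u <:+: w ∧ u.reverse = u} = w.length + 1

/-- `u` is a (finite) factor of the infinite word `w`. -/
def IsFactorInf {A : Type*} (w : ℕ → A) (u : List A) : Prop :=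
  ∃ i : ℕ, u = (List.range u.length).map fun k => w (i + k)

/-- A Q-property of finite words. -/
structure IsQProperty {A : Type*} (Q : List A → Prop) : Prop where
  q_nil : Q []
  q_single : ∀ a : A, Q [a]
  ends_at_every_position : ∀ (w : List A) (i : ℕ), 1 ≤ i → i ≤ w.length →
    ∃ u : List A, u ≠ [] ∧ u <:+ w.take i ∧ Q u
  introduces_at_most_one : ∀ (w : List A) (i : ℕ) (u v : List A),
    Introduces w i u → Introduces w i v → Q u → Q v → u = v

/-- Q-complexity of an infinite word: the number of distinct factors of length `n`
having property `Q`. -/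
noncomputable def qComplexityInf {A : Type*} (w : ℕ → A) (Q : List A → Prop) (n : ℕ) : ℕ :=
  Set.ncard {u : List A | IsFactorInf w u ∧ Q u ∧ u.length = n}

/-- Privileged complexity of an infinite word. -/
noncomputable def privComplexityInf {A : Type*} (w : ℕ → A) (n : ℕ) : ℕ :=
  Set.ncard {u : List A | IsFactorInf w u ∧ Privileged u ∧ u.length = n}

/-- Palindromic complexity of an infinite word. -/
noncomputable def palComplexityInf {A : Type*} (w : ℕ → A) (n : ℕ) : ℕ :=
  Set.ncard {u : List A | IsFactorInf w u ∧ u.reverse = u ∧ u.length = n}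

/-- An infinite word is ultimately periodic if it is of the form `u v v v ⋯`
with `v` nonempty. -/
def UltimatelyPeriodic {A : Type*} (w : ℕ → A) : Prop :=
  ∃ u v : List A, v ≠ [] ∧ ∀ n : ℕ, w n =
    if n < u.length then u.getD n (w 0)
    else v.getD ((n - u.length) % v.length) (w 0)

/-- An infinite word is Sturmian if it has exactly `n + 1` distinct factors of
length `n` for every `n`. -/
def Sturmian {A : Type*} (w : ℕ → A) : Prop :=
  ∀ n : ℕ, Set.ncard {u : List A | IsFactorInf w u ∧ u.length = n} = n + 1

/-- A finite binary word is balanced: its set of factors is balanced. -/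
def BalancedWord (x : List Bool) : Prop :=
  ∀ u v : List Bool, u <:+: x → v <:+: x → u.length = v.length →
    ((u.count true : ℤ) - (v.count true : ℤ)).natAbs ≤ 1

/-- `u` is a right special factor of the infinite word `w`. -/
def RightSpecial {A : Type*} (w : ℕ → A) (u : List A) : Prop :=
  ∃ a b : A, a ≠ b ∧ IsFactorInf w (u ++ [a]) ∧ IsFactorInf w (u ++ [b])

/-- The Thue-Morse word: the `n`-th letter is the parity of the number of ones in the
binary expansion of `n` (`false` = 0, `true` = 1). -/
def thueMorse (n : ℕ) : Bool := (Nat.digits 2 n).count 1 % 2 == 1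


/-!
Squares `aa` occur in `t` only at odd positions, since `t (2n + 1) = !t (2n)`. A privileged word
begins and ends with the same letter, so if its length is even it contains a square, and any two
of its occurrences in `t` lie at even distance. Hence a complete first return `w` of odd length to
a nonempty privileged word `u` forces `|u|` odd, and by induction `|u| = 1` or `|u| = 3`.
Returns to a single letter have length at most 4 because `t` is cube-free, and the only
privileged candidate of length 3 is `u = aāa`. Occurrences of `aāa` at positions `r` and `r + 2p`
desubstitute to squares of `t` at the odd positions `r / 2` and `r / 2 + p`, made of the same
letter. So `p` is even and `t` has a further square strictly between them, whose image `bb̄bb̄`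
contains an occurrence of `aāa` strictly inside `w`.
-/

section FactorAt

variable {α : Type*}

def factorAt (f : ℕ → α) (i m : ℕ) : List α := (List.range m).map fun k => f (i + k)

@[simp]
lemma length_factorAt (f : ℕ → α) (i m : ℕ) : (factorAt f i m).length = m := by
  simp [factorAt]

lemma factorAt_one (f : ℕ → α) (i : ℕ) : factorAt f i 1 = [f i] := by
  simp [factorAt]

lemma factorAt_three (f : ℕ → α) (i : ℕ) :
    factorAt f i 3 = [f i, f (i + 1), f (i + 2)] := by
  simp [factorAt, List.range_succ]

lemma take_drop_factorAt (f : ℕ → α) {i j m n : ℕ} (h : j + m ≤ n) :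
    ((factorAt f i n).drop j).take m = factorAt f (i + j) m := by
  apply List.ext_getElem
    (by simp only [List.length_take, List.length_drop, length_factorAt]; omega)
  intro k _ _
  simp [factorAt, Nat.add_assoc]

end FactorAt

lemma occCount_nil {α : Type*} (w : List α) : occCount [] w = w.length + 1 := by
  have h : {i : ℕ | i + 0 ≤ w.length ∧ (w.drop i).take 0 = []} =
      ↑(Finset.range (w.length + 1)) := by
    ext j; simp
  rw [occCount, List.length_nil, h, Set.ncard_coe_finset, Finset.card_range]

namespace IsCompleteFirstReturn

variable {α : Type*} {w u : List α}

lemma ne_nil (hret : IsCompleteFirstReturn w u) (hw : 2 ≤ w.length) : u ≠ [] := by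
  rintro rfl
  have h := hret.2.2
  rw [occCount_nil] at h
  omega

lemma take_length_eq (hret : IsCompleteFirstReturn w u) : w.take u.length = u :=
  (List.prefix_iff_eq_take.mp hret.1).symm

lemma take_drop_length_sub_eq (hret : IsCompleteFirstReturn w u) :
    (w.drop (w.length - u.length)).take u.length = u := by
  rw [← List.suffix_iff_eq_drop.mp hret.2.1, List.take_length]

lemma eq_zero_or_eq_of_take_drop_eq (hret : IsCompleteFirstReturn w u) {j : ℕ}
    (hj : j + u.length ≤ w.length) (h : (w.drop j).take u.length = u) :
    j = 0 ∨ j = w.length - u.length := by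
  obtain ⟨x, y, -, hxy⟩ := Set.ncard_eq_two.mp hret.2.2
  have hmem : ∀ z, z + u.length ≤ w.length → (w.drop z).take u.length = u →
      z = x ∨ z = y := by
    intro z hz hzu
    have hz' : z ∈ {i : ℕ | i + u.length ≤ w.length ∧ (w.drop i).take u.length = u} :=
      ⟨hz, hzu⟩
    simpa [occCount, hxy] using hz'
  have h0 := hmem 0 (by simpa using hret.1.length_le) (by simpa using hret.take_length_eq)
  have hL := hmem _ (by have := hret.1.length_le; omega) hret.take_drop_length_sub_eq
  have hJ := hmem j hj h
  omega

variable {f : ℕ → α} {i : ℕ}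

lemma factorAt_prefix (hret : IsCompleteFirstReturn w u) (hw : w = factorAt f i w.length) :
    factorAt f i u.length = u := by
  have h := take_drop_factorAt f (i := i) (j := 0) (by simpa using hret.1.length_le)
  rwa [List.drop_zero, ← hw, hret.take_length_eq, Nat.add_zero, eq_comm] at h

lemma factorAt_suffix (hret : IsCompleteFirstReturn w u) (hw : w = factorAt f i w.length) :
    factorAt f (i + (w.length - u.length)) u.length = u := by
  have h := hret.take_drop_length_sub_eq
  rw [hw, length_factorAt, take_drop_factorAt f (by have := hret.1.length_le; omega)] at h
  exact h

lemma isFactorInf (hret : IsCompleteFirstReturn w u) (hw : IsFactorInf f w) :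
    IsFactorInf f u :=
  let ⟨i, hi⟩ := hw
  ⟨i, (hret.factorAt_prefix hi).symm⟩

lemma eq_zero_or_eq_of_factorAt_eq (hret : IsCompleteFirstReturn w u)
    (hw : w = factorAt f i w.length) {j : ℕ} (hj : j + u.length ≤ w.length)
    (h : factorAt f (i + j) u.length = u) : j = 0 ∨ j = w.length - u.length := by
  refine hret.eq_zero_or_eq_of_take_drop_eq hj ?_
  rwa [hw, take_drop_factorAt f hj]

end IsCompleteFirstReturn

lemma Privileged.head?_eq_getLast? {α : Type*} {v : List α} (hv : Privileged v) :
    v.head? = v.getLast? := by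
  induction hv with
  | nil => rfl
  | single a => rfl
  | ret w u hw _ _ hret ih =>
    obtain ⟨s, rfl⟩ := hret.1
    obtain ⟨s', hs'⟩ := hret.2.1
    have hne := hret.ne_nil hw
    rw [List.head?_append, ← hs', List.getLast?_append, ih, List.getLast?_eq_some_getLast hne]
    rfl

lemma exists_apply_eq_apply_succ_of_odd (f : ℕ → Bool) {s l : ℕ} (hl : Odd l)
    (h : f s = f (s + l)) : ∃ k, s ≤ k ∧ k < s + l ∧ f k = f (k + 1) := by
  obtain ⟨p, rfl⟩ := hl
  induction p generalizing s with
  | zero => exact ⟨s, le_rfl, by omega, h⟩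
  | succ p ih =>
    by_cases h0 : f s = f (s + 1)
    · exact ⟨s, le_rfl, by omega, h0⟩
    by_cases h1 : f (s + 1) = f (s + 2)
    · exact ⟨s + 1, by omega, by omega, h1⟩
    have h2 : f (s + 2) = f (s + 2 + (2 * p + 1)) := by
      rw [show s + 2 + (2 * p + 1) = s + (2 * (p + 1) + 1) by ring, ← h]
      revert h0 h1
      cases f s <;> cases f (s + 1) <;> cases f (s + 2) <;> simp
    obtain ⟨k, hk₁, hk₂, hk⟩ := ih h2
    exact ⟨k, by omega, by omega, hk⟩

section ThueMorse

lemma thueMorse_two_mul (n : ℕ) : thueMorse (2 * n) = thueMorse n := by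
  rcases Nat.eq_zero_or_pos n with rfl | hn
  · rfl
  · simp [thueMorse, Nat.digits_def' (by norm_num : 1 < 2) (by omega : 0 < 2 * n)]

lemma thueMorse_two_mul_add_one (n : ℕ) : thueMorse (2 * n + 1) = !thueMorse n := by
  rw [thueMorse, Nat.digits_def' (by norm_num) (by omega)]
  have h1 : (2 * n + 1) % 2 = 1 := by omega
  have h2 : (2 * n + 1) / 2 = n := by omega
  rw [h1, h2, List.count_cons]
  rcases Nat.mod_two_eq_zero_or_one ((Nat.digits 2 n).count 1) with h | h <;>
    simp [thueMorse, Nat.add_mod, h]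

lemma odd_of_thueMorse_eq_succ {k : ℕ} (h : thueMorse k = thueMorse (k + 1)) : Odd k := by
  obtain ⟨q, rfl | rfl⟩ := Nat.even_or_odd' k
  · rw [thueMorse_two_mul, thueMorse_two_mul_add_one] at h
    cases thueMorse q <;> simp at h
  · exact odd_two_mul_add_one q

lemma thueMorse_cube_free (k : ℕ) :
    ¬(thueMorse k = thueMorse (k + 1) ∧ thueMorse (k + 1) = thueMorse (k + 2)) := by
  rintro ⟨h₁, h₂⟩
  obtain ⟨a, ha⟩ := odd_of_thueMorse_eq_succ h₁
  obtain ⟨b, hb⟩ := odd_of_thueMorse_eq_succ h₂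
  omega

lemma thueMorse_mod_two_eq_of_factorAt_eq {r r' m : ℕ} (hm : Even m) (hpos : 0 < m)
    (hend : thueMorse r = thueMorse (r + (m - 1)))
    (h : factorAt thueMorse r m = factorAt thueMorse r' m) : r % 2 = r' % 2 := by
  have hshift : ∀ j < m, thueMorse (r + j) = thueMorse (r' + j) := by
    intro j hj
    simpa [factorAt, hj] using congrArg (·[j]?) h
  obtain ⟨k, hk₁, hk₂, hk⟩ := exists_apply_eq_apply_succ_of_odd thueMorse
    (by obtain ⟨c, hc⟩ := hm; exact ⟨c - 1, by omega⟩) hend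
  have e₁ := hshift (k - r) (by omega)
  have e₂ := hshift (k - r + 1) (by omega)
  rw [show r + (k - r) = k by omega] at e₁
  rw [show r + (k - r + 1) = k + 1 by omega, ← add_assoc] at e₂
  obtain ⟨a, ha⟩ := odd_of_thueMorse_eq_succ hk
  obtain ⟨b, hb⟩ := odd_of_thueMorse_eq_succ (e₁ ▸ e₂ ▸ hk)
  omega

lemma thueMorse_div_two_of_factorAt_eq {r : ℕ} {a : Bool}
    (h : factorAt thueMorse r 3 = [a, !a, a]) :
    thueMorse (r / 2) = (if r % 2 = 0 then a else !a) ∧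
      thueMorse (r / 2 + 1) = thueMorse (r / 2) := by
  simp only [factorAt_three, List.cons.injEq, and_true] at h
  obtain ⟨h₀, h₁, h₂⟩ := h
  obtain ⟨q, rfl | rfl⟩ := Nat.even_or_odd' r
  · rw [show 2 * q + 2 = 2 * (q + 1) by ring, thueMorse_two_mul] at h₂
    rw [thueMorse_two_mul] at h₀
    simp [h₀, h₂]
  · rw [thueMorse_two_mul_add_one] at h₀
    rw [show 2 * q + 1 + 1 = 2 * (q + 1) by ring, thueMorse_two_mul] at h₁
    have hq : (2 * q + 1) / 2 = q := by omega
    simp [hq, h₁, ← h₀]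

lemma exists_factorAt_eq_of_thueMorse_eq_succ {k : ℕ}
    (h : thueMorse k = thueMorse (k + 1)) (a : Bool) :
    ∃ r, 2 * k ≤ r ∧ r ≤ 2 * k + 1 ∧ factorAt thueMorse r 3 = [a, !a, a] := by
  have e₁ : thueMorse (2 * k + 2) = thueMorse k := by
    rw [show 2 * k + 2 = 2 * (k + 1) by ring, thueMorse_two_mul, h]
  have e₂ : thueMorse (2 * k + 1 + 2) = !thueMorse k := by
    rw [show 2 * k + 1 + 2 = 2 * (k + 1) + 1 by ring, thueMorse_two_mul_add_one, h]
  by_cases ha : thueMorse k = a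
  · refine ⟨2 * k, le_rfl, by omega, ?_⟩
    rw [factorAt_three, thueMorse_two_mul, thueMorse_two_mul_add_one, e₁, ha]
  · refine ⟨2 * k + 1, by omega, le_rfl, ?_⟩
    rw [factorAt_three, thueMorse_two_mul_add_one, show 2 * k + 1 + 1 = 2 * k + 2 by ring, e₁,
      e₂]
    cases a <;> simp_all

lemma thueMorse_exists_factorAt_eq_between {r p : ℕ} {a : Bool} (hp : 0 < p)
    (h : factorAt thueMorse r 3 = [a, !a, a])
    (h' : factorAt thueMorse (r + 2 * p) 3 = [a, !a, a]) :
    ∃ r'', r < r'' ∧ r'' < r + 2 * p ∧ factorAt thueMorse r'' 3 = [a, !a, a] := by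
  obtain ⟨hc, hq⟩ := thueMorse_div_two_of_factorAt_eq h
  obtain ⟨hc', hq'⟩ := thueMorse_div_two_of_factorAt_eq h'
  rw [show (r + 2 * p) / 2 = r / 2 + p by omega] at hc' hq'
  rw [show (r + 2 * p) % 2 = r % 2 by omega, ← hc] at hc'
  obtain ⟨x, hx⟩ := odd_of_thueMorse_eq_succ hq.symm
  obtain ⟨y, hy⟩ := odd_of_thueMorse_eq_succ hq'.symm
  obtain ⟨k, hk₁, hk₂, hk⟩ := exists_apply_eq_apply_succ_of_odd thueMorse (l := p - 1)
    ⟨y - x - 1, by omega⟩ (by rw [show r / 2 + 1 + (p - 1) = r / 2 + p by omega, hq, hc'])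
  obtain ⟨r'', h₁, h₂, h''⟩ := exists_factorAt_eq_of_thueMorse_eq_succ hk a
  exact ⟨r'', by omega, by omega, h''⟩

lemma Privileged.eq_of_isFactorInf_thueMorse {u : List Bool} (hu : Privileged u)
    (hfac : IsFactorInf thueMorse u) (h3 : u.length = 3) : ∃ a, u = [a, !a, a] := by
  obtain ⟨x, y, z, rfl⟩ := List.length_eq_three.mp h3
  have hzx : z = x := by simpa using hu.head?_eq_getLast?.symm
  obtain ⟨i, hi⟩ := hfac
  have hcube := thueMorse_cube_free i
  simp only [List.length_cons, List.length_nil] at hi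
  rw [← factorAt, factorAt_three] at hi
  simp only [List.cons.injEq, and_true] at hi
  obtain ⟨hx, hy, hz⟩ := hi
  rw [← hx, ← hy, ← hz, hzx] at hcube
  refine ⟨x, ?_⟩
  rw [hzx]
  cases x <;> cases y <;> simp_all

variable {w u : List Bool}

lemma even_length_of_isCompleteFirstReturn_of_even
    (hw : IsFactorInf thueMorse w) (hret : IsCompleteFirstReturn w u) (hu : Privileged u)
    (hne : u ≠ []) (heven : Even u.length) : Even w.length := by
  obtain ⟨i, hw⟩ := hw
  have hpre := hret.factorAt_prefix hw
  have hsuf := hret.factorAt_suffix hw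
  have hpos := List.length_pos_iff.mpr hne
  have hend : thueMorse i = thueMorse (i + (u.length - 1)) := by
    have h := hu.head?_eq_getLast?
    rw [← hpre] at h
    simpa [List.head?_eq_getElem?, List.getLast?_eq_getElem?, factorAt, hpos] using h
  have hmod := thueMorse_mod_two_eq_of_factorAt_eq heven hpos hend (hpre.trans hsuf.symm)
  have := hret.1.length_le
  obtain ⟨c, hc⟩ := heven
  rw [Nat.even_iff]
  omega

lemma length_lt_five_of_isCompleteFirstReturn_singleton {a : Bool}
    (hw : IsFactorInf thueMorse w) (hret : IsCompleteFirstReturn w [a]) : w.length < 5 := by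
  obtain ⟨i, hw⟩ := hw
  by_contra! h5
  have hflip : ∀ j, 1 ≤ j → j ≤ 3 → thueMorse (i + j) = !a := by
    intro j hj₁ hj₃
    by_contra hj
    have := hret.eq_zero_or_eq_of_factorAt_eq hw (j := j) (by rw [List.length_singleton]; omega)
      (by simpa [factorAt_one] using hj)
    rw [List.length_singleton] at this
    omega
  refine thueMorse_cube_free (i + 1) ⟨?_, ?_⟩
  · rw [hflip 1 le_rfl (by omega), add_assoc, hflip 2 (by omega) (by omega)]
  · rw [add_assoc, add_assoc, hflip 2 (by omega) (by omega), hflip 3 (by omega) le_rfl]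

lemma even_length_of_isCompleteFirstReturn_alternating {a : Bool}
    (hw : IsFactorInf thueMorse w) (hret : IsCompleteFirstReturn w [a, !a, a])
    (hlt : 3 < w.length) : Even w.length := by
  obtain ⟨i, hw⟩ := hw
  by_contra hodd
  obtain ⟨p, hp⟩ : ∃ p, w.length = 2 * p + 3 := by
    obtain ⟨c, hc⟩ := Nat.not_even_iff_odd.mp hodd
    exact ⟨c - 1, by omega⟩
  have h := hret.factorAt_prefix hw
  have h' := hret.factorAt_suffix hw
  simp only [List.length_cons, List.length_nil] at h h'
  rw [show i + (w.length - 3) = i + 2 * p by omega] at h'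
  obtain ⟨r, hr₁, hr₂, hr⟩ := thueMorse_exists_factorAt_eq_between (by omega) h h'
  have := hret.eq_zero_or_eq_of_factorAt_eq hw (j := r - i)
    (by simp only [List.length_cons, List.length_nil]; omega)
    (by rwa [show i + (r - i) = r by omega])
  simp only [List.length_cons, List.length_nil] at this
  omega

end ThueMorse

/-- The Thue-Morse word has no privileged factor of odd length `n ≥ 5`. -/
theorem thue_morse_no_long_odd_privileged (w : List Bool)
    (hfac : IsFactorInf thueMorse w) (hpriv : Privileged w) (hodd : Odd w.length) :
    w.length < 5 := by
  induction hpriv with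
  | nil => simp
  | single a => simp
  | ret w u hw₂ hlt hu hret ih =>
    have hu_odd : Odd u.length := Nat.not_even_iff_odd.mp fun heven => Nat.not_even_iff_odd.mpr
      hodd (even_length_of_isCompleteFirstReturn_of_even hfac hret hu (hret.ne_nil hw₂) heven)
    have hu_fac := hret.isFactorInf hfac
    obtain hu1 | hu3 : u.length = 1 ∨ u.length = 3 := by
      have := ih hu_fac hu_odd
      obtain ⟨c, hc⟩ := hu_odd
      omega
    · obtain ⟨a, rfl⟩ := List.length_eq_one_iff.mp hu1
      exact length_lt_five_of_isCompleteFirstReturn_singleton hfac hret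
    · obtain ⟨a, rfl⟩ := hu.eq_of_isFactorInf_thueMorse hu_fac hu3
      exact absurd (even_length_of_isCompleteFirstReturn_alternating hfac hret (by simpa using hlt))
        (Nat.not_even_iff_odd.mpr hodd)
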